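/- Consider problems (P₁) and (P₂) and suppose there exists (x̄,ū,w̄) with h(x̄,ū,w̄) < 0. Then the infimum of (P₁) equals the infimum of (P₂) (as extended real numbers). Moreover, if (P₂) attains its infimum, then it attains it at a point (x̄,ȳ,z̄) satisfying ½x̄ᵢ² = ȳᵢ for all i = 1,…,l. -/
import Mathlib


open scoped Classical

/-- The objective `f(x,u,w) = Σᵢ(½δᵢxᵢ² + eᵢxᵢ) + Σⱼ(ζⱼuⱼwⱼ + ½wⱼ² + ηⱼwⱼ)` of problem (P₁). -/
noncomputable def quadObj {l k : ℕ} (δ e : Fin l → ℝ) (ζ η : Fin k → ℝ)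
    (x : Fin l → ℝ) (u w : Fin k → ℝ) : ℝ :=
  (∑ i, ((1/2) * δ i * x i ^ 2 + e i * x i)) +
    ∑ j, (ζ j * u j * w j + (1/2) * w j ^ 2 + η j * w j)

/-- The constraint function `h(x,u,w) = Σᵢ(½αᵢxᵢ² + bᵢxᵢ) + Σⱼ uⱼwⱼ + c` of problem (P₁). -/
noncomputable def quadCon {l k : ℕ} (α b : Fin l → ℝ) (c : ℝ)
    (x : Fin l → ℝ) (u w : Fin k → ℝ) : ℝ :=
  (∑ i, ((1/2) * α i * x i ^ 2 + b i * x i)) + (∑ j, u j * w j) + c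

/-- The SOCP objective `Σᵢ(δᵢyᵢ + eᵢxᵢ) + Σⱼ ζⱼzⱼ + c₀` of problem (P₂). -/
noncomputable def socpObj {l k : ℕ} (δ e : Fin l → ℝ) (ζ : Fin k → ℝ) (c₀ : ℝ)
    (x y : Fin l → ℝ) (z : Fin k → ℝ) : ℝ :=
  (∑ i, (δ i * y i + e i * x i)) + (∑ j, ζ j * z j) + c₀

/-- The linear part `Σᵢ(αᵢyᵢ + bᵢxᵢ) + Σⱼ zⱼ` of the SOCP constraint in (P₂). -/
noncomputable def socpConLhs {l k : ℕ} (α b : Fin l → ℝ)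
    (x y : Fin l → ℝ) (z : Fin k → ℝ) : ℝ :=
  (∑ i, (α i * y i + b i * x i)) + ∑ j, z j

/-- The optimal value (in the extended reals) of the SOCP problem (P₂). -/
noncomputable def socpVal {l k : ℕ} (δ e α b : Fin l → ℝ) (ζ : Fin k → ℝ) (c c₀ : ℝ) : EReal :=
  sInf {v : EReal | ∃ (x y : Fin l → ℝ) (z : Fin k → ℝ),
    socpConLhs α b x y z + c ≤ 0 ∧ (∀ i, (1/2) * x i ^ 2 ≤ y i) ∧
    v = (socpObj δ e ζ c₀ x y z : EReal)}

/-- Theorem 2.7 (main theorem) of Jiang–Li–Wu: under the Slater condition, the GTRS in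
separated canonical form (P₁) has the same optimal value as its SOCP reformulation (P₂);
moreover if (P₂) attains its optimal value then it attains it at a point with
`½xᵢ² = yᵢ` for all `i`. -/


lemma far_le (m A B : ℝ) (hm : 0 < m) :
    ∃ τ₀ : ℝ, 0 ≤ τ₀ ∧ ∀ τ, τ₀ ≤ τ → -((1/2)*m)*τ^2 + A*τ + B ≤ 0 := by
  refine ⟨(2*(|A|+|B|+1))/m + 1, by positivity, fun τ hτ => ?_⟩
  have hτ1 : 1 ≤ τ := by
    have : (0:ℝ) ≤ (2*(|A|+|B|+1))/m := by positivity
    linarith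
  have hmτ : 2*(|A|+|B|+1) + m ≤ m * τ := by
    have := mul_le_mul_of_nonneg_left hτ hm.le
    rw [mul_add, mul_div_cancel₀ _ hm.ne'] at this
    linarith
  nlinarith [le_abs_self A, le_abs_self B, abs_nonneg A, abs_nonneg B,
    mul_le_mul_of_nonneg_right hmτ (le_trans zero_le_one hτ1),
    mul_le_mul_of_nonneg_right (le_abs_self A) (le_trans zero_le_one hτ1),
    mul_le_mul_of_nonneg_right (abs_nonneg B) (sub_nonneg.mpr hτ1)]

lemma exists_root (a e C x X : ℝ)
    (hx : 0 < (1/2)*a*x^2 + e*x + C) (hX : (1/2)*a*X^2 + e*X + C ≤ 0) :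
    ∃ t ∈ Set.uIcc x X, (1/2)*a*t^2 + e*t + C = 0 := by
  have hcont : ContinuousOn (fun t : ℝ => (1/2)*a*t^2 + e*t + C) (Set.uIcc x X) :=
    (by fun_prop : Continuous fun t : ℝ => (1/2)*a*t^2 + e*t + C).continuousOn
  have h0 : (0:ℝ) ∈ Set.uIcc ((1/2)*a*x^2 + e*x + C) ((1/2)*a*X^2 + e*X + C) :=
    Set.mem_uIcc.mpr (Or.inr ⟨hX, hx.le⟩)
  obtain ⟨t, ht, ht0⟩ := intermediate_value_uIcc hcont h0
  exact ⟨t, ht, ht0⟩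

/-- Mixed case: `d < 0 ≤ a`. -/
lemma key_mixed (d e a b x y : ℝ) (hy : (1/2)*x^2 ≤ y) (hd : d < 0) (ha : 0 ≤ a) :
    ∃ t, (1/2)*d*t^2 + e*t ≤ d*y + e*x ∧ (1/2)*a*t^2 + b*t ≤ a*y + b*x := by
  rcases eq_or_lt_of_le hy with heq | hlt
  · exact ⟨x, by nlinarith, by nlinarith⟩
  set E : ℝ := a*e - d*b with hE
  set dir : ℝ := if E ≤ 0 then 1 else -1 with hdirdef
  have hdir : dir = 1 ∨ dir = -1 := by
    by_cases h : E ≤ 0 <;> simp [hdirdef, h]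
  have hdir2 : dir^2 = 1 := by rcases hdir with h | h <;> simp [h]
  have hEdir : E * dir ≤ 0 := by
    by_cases h : E ≤ 0
    · simpa [hdirdef, h] using h
    · simp [hdirdef, h]; push_neg at h; linarith
  set C1 : ℝ := -(d*y + e*x) with hC1
  have hQ1x : 0 < (1/2)*d*x^2 + e*x + C1 := by rw [hC1]; nlinarith
  obtain ⟨τ₀, hτ₀0, hfar⟩ := far_le (-d) ((d*x+e)*dir) ((1/2)*d*x^2 + e*x + C1) (by linarith)
  have hXle : (1/2)*d*(x + dir*τ₀)^2 + e*(x + dir*τ₀) + C1 ≤ 0 := by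
    have h := hfar τ₀ le_rfl
    have heq2 : (1/2)*d*(x + dir*τ₀)^2 + e*(x + dir*τ₀) + C1 =
        -((1/2)*(-d))*τ₀^2 + ((d*x+e)*dir)*τ₀ + ((1/2)*d*x^2 + e*x + C1) := by
      linear_combination ((1/2)*d*τ₀^2) * hdir2
    linarith [heq2 ▸ h]
  obtain ⟨t, htmem, ht0⟩ := exists_root d e C1 x (x + dir*τ₀) hQ1x hXle
  have hsign : 0 ≤ dir * (t - x) := by
    rcases hdir with h | h
    · rw [h] at htmem
      rw [Set.uIcc_of_le (by linarith : x ≤ x + 1*τ₀)] at htmem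
      rw [h]; simp only [one_mul]; linarith [htmem.1]
    · rw [h] at htmem
      rw [Set.uIcc_of_ge (by nlinarith : x + (-1)*τ₀ ≤ x)] at htmem
      rw [h]; nlinarith [htmem.2]
  have hEt : E * (t - x) ≤ 0 := by
    have h1 : E * dir * (dir * (t - x)) ≤ 0 := mul_nonpos_of_nonpos_of_nonneg hEdir hsign
    nlinarith [hdir2]
  refine ⟨t, by rw [hC1] at ht0; linarith, ?_⟩
  -- identity: a*Q1(t) - d*Q2(t) = E*(t-x)
  have hid : a*((1/2)*d*t^2 + e*t + C1) - d*((1/2)*a*t^2 + b*t - (a*y + b*x)) = E*(t-x) := by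
    rw [hE, hC1]; ring
  rw [ht0] at hid
  clear_value E dir C1
  by_contra hcon
  push_neg at hcon
  have hpos : 0 < -d * ((1/2)*a*t^2 + b*t - (a*y + b*x)) :=
    mul_pos (by linarith) (by linarith)
  linarith

/-- Key pointwise lemma. -/
lemma key_pt (d e a b x y : ℝ) (hy : (1/2)*x^2 ≤ y) :
    ∃ t, (1/2)*d*t^2 + e*t ≤ d*y + e*x ∧ (1/2)*a*t^2 + b*t ≤ a*y + b*x := by
  rcases le_or_gt 0 d with hd | hd <;> rcases le_or_gt 0 a with ha | ha
  · exact ⟨x, by nlinarith, by nlinarith⟩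
  · obtain ⟨t, h1, h2⟩ := key_mixed a b d e x y hy ha hd
    exact ⟨t, h2, h1⟩
  · exact key_mixed d e a b x y hy hd ha
  · obtain ⟨τ₁, hτ₁0, hfar1⟩ := far_le (-d) (d*x+e) ((1/2)*d*x^2+e*x - (d*y+e*x)) (by linarith)
    obtain ⟨τ₂, hτ₂0, hfar2⟩ := far_le (-a) (a*x+b) ((1/2)*a*x^2+b*x - (a*y+b*x)) (by linarith)
    refine ⟨x + max τ₁ τ₂, ?_, ?_⟩
    · have h := hfar1 (max τ₁ τ₂) (le_max_left _ _); nlinarith [h]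
    · have h := hfar2 (max τ₁ τ₂) (le_max_right _ _); nlinarith [h]

theorem stmt_9 (l k : ℕ) (δ e α b : Fin l → ℝ) (ζ η : Fin k → ℝ) (c c₀ : ℝ)
    (hc₀ : c₀ = -(1/2) * ∑ j, η j ^ 2)
    (hslater : ∃ (x : Fin l → ℝ) (u w : Fin k → ℝ), quadCon α b c x u w < 0) :
    sInf {v : EReal | ∃ (x : Fin l → ℝ) (u w : Fin k → ℝ),
        quadCon α b c x u w ≤ 0 ∧ v = (quadObj δ e ζ η x u w : EReal)} =
      socpVal δ e α b ζ c c₀ ∧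
    ((∃ (x y : Fin l → ℝ) (z : Fin k → ℝ), socpConLhs α b x y z + c ≤ 0 ∧
        (∀ i, (1/2) * x i ^ 2 ≤ y i) ∧
        (socpObj δ e ζ c₀ x y z : EReal) = socpVal δ e α b ζ c c₀) →
      ∃ (x y : Fin l → ℝ) (z : Fin k → ℝ), socpConLhs α b x y z + c ≤ 0 ∧
        (∀ i, (1/2) * x i ^ 2 ≤ y i) ∧ (∀ i, (1/2) * x i ^ 2 = y i) ∧
        (socpObj δ e ζ c₀ x y z : EReal) = socpVal δ e α b ζ c c₀) := by
  constructor
  · apply le_antisymm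
    · -- sInf P1 ≤ socpVal
      rw [socpVal]
      apply le_sInf
      rintro v ⟨x, y, z, hcon, hy, rfl⟩
      by_contra hlt
      push_neg at hlt
      obtain ⟨r, hr1, hr2⟩ := EReal.lt_iff_exists_real_btwn.mp hlt
      set V := socpObj δ e ζ c₀ x y z with hV
      have hrV : V < r := EReal.coe_lt_coe_iff.mp hr1
      -- construct a P1-feasible point with objective ≤ r
      choose t ht1 ht2 using fun i => key_pt (δ i) (e i) (α i) (b i) (x i) (y i) (hy i)
      set ε' : ℝ := Real.sqrt ((r - V) / (k+1)) with hε'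
      have hkpos : (0:ℝ) < (k:ℝ) + 1 := by positivity
      have hε'pos : 0 < ε' := Real.sqrt_pos.mpr (div_pos (by linarith) hkpos)
      have hε'sq : ε'^2 = (r - V)/(k+1) := Real.sq_sqrt (div_pos (by linarith) hkpos).le
      set w' : Fin k → ℝ := fun j => if η j = 0 then ε' else -η j with hw'
      have hw'ne : ∀ j, w' j ≠ 0 := by
        intro j
        by_cases h : η j = 0
        · simp only [hw', h, if_pos]; exact hε'pos.ne'
        · simp only [hw', if_neg h]; exact neg_ne_zero.mpr h
      set u' : Fin k → ℝ := fun j => z j / w' j with hu'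
      have huw : ∀ j, u' j * w' j = z j := fun j => div_mul_cancel₀ _ (hw'ne j)
      have hsum_uw : ∑ j, u' j * w' j = ∑ j, z j :=
        Finset.sum_congr rfl fun j _ => huw j
      -- constraint
      have hcon' : quadCon α b c t u' w' ≤ 0 := by
        rw [quadCon, hsum_uw]
        have h1 : ∑ i, ((1/2) * α i * t i ^ 2 + b i * t i) ≤ ∑ i, (α i * y i + b i * x i) :=
          Finset.sum_le_sum fun i _ => ht2 i
        rw [socpConLhs] at hcon
        linarith
      -- objective
      have hobj : quadObj δ e ζ η t u' w' ≤ r := by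
        rw [quadObj]
        have h1 : ∑ i, ((1/2) * δ i * t i ^ 2 + e i * t i) ≤ ∑ i, (δ i * y i + e i * x i) :=
          Finset.sum_le_sum fun i _ => ht1 i
        have h2 : ∑ j, (ζ j * u' j * w' j + (1/2) * w' j ^ 2 + η j * w' j)
            ≤ ∑ j, (ζ j * z j + (-(1/2) * η j ^ 2) + (1/2) * ε'^2) := by
          apply Finset.sum_le_sum
          intro j _
          have hz : ζ j * u' j * w' j = ζ j * z j := by rw [mul_assoc, huw j]
          rw [hz]
          by_cases h : η j = 0
          · simp only [hw', h, if_pos]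
            norm_num
          · simp only [hw', if_neg h]
            nlinarith [sq_nonneg ε']
        have h3 : ∑ j, (ζ j * z j + (-(1/2) * η j ^ 2) + (1/2) * ε'^2)
            = (∑ j, ζ j * z j) + (-(1/2) * ∑ j, η j ^ 2) + (k:ℝ) * ((1/2) * ε'^2) := by
          rw [Finset.sum_add_distrib, Finset.sum_add_distrib, Finset.sum_const,
            Finset.card_univ, Fintype.card_fin, nsmul_eq_mul, Finset.mul_sum]
        have h4 : (k:ℝ) * ((1/2) * ε'^2) ≤ r - V := by
          rw [hε'sq]
          have hk1 : (k:ℝ)/((k:ℝ)+1) ≤ 1 := (div_le_one hkpos).mpr (by linarith)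
          calc (k:ℝ) * ((1/2) * ((r - V)/(k+1))) = ((k:ℝ)/((k:ℝ)+1)) * ((r-V)/2) := by ring
            _ ≤ 1 * ((r-V)/2) := mul_le_mul_of_nonneg_right hk1 (by linarith)
            _ ≤ r - V := by linarith
        rw [h3] at h2
        have hVexp : V = (∑ i, (δ i * y i + e i * x i)) + (∑ j, ζ j * z j)
            + (-(1/2) * ∑ j, η j ^ 2) := by rw [hV, socpObj, hc₀]
        linarith
      have hmem1 : (quadObj δ e ζ η t u' w' : EReal)
          ∈ {v : EReal | ∃ (x : Fin l → ℝ) (u w : Fin k → ℝ),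
              quadCon α b c x u w ≤ 0 ∧ v = (quadObj δ e ζ η x u w : EReal)} :=
        ⟨t, u', w', hcon', rfl⟩
      have hfin : sInf {v : EReal | ∃ (x : Fin l → ℝ) (u w : Fin k → ℝ),
          quadCon α b c x u w ≤ 0 ∧ v = (quadObj δ e ζ η x u w : EReal)} ≤ (r : EReal) :=
        le_trans (sInf_le hmem1) (EReal.coe_le_coe_iff.mpr hobj)
      exact absurd hfin (not_le.mpr hr2)
    · -- socpVal ≤ sInf P1
      apply le_sInf
      rintro v ⟨x, u, w, hcon, rfl⟩
      have hmem : (socpObj δ e ζ c₀ x (fun i => (1/2) * x i ^ 2) (fun j => u j * w j) : EReal)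
          ∈ {v : EReal | ∃ (x y : Fin l → ℝ) (z : Fin k → ℝ),
              socpConLhs α b x y z + c ≤ 0 ∧ (∀ i, (1/2) * x i ^ 2 ≤ y i) ∧
              v = (socpObj δ e ζ c₀ x y z : EReal)} := by
        refine ⟨x, _, _, ?_, fun i => le_rfl, rfl⟩
        rw [socpConLhs]
        have : ∑ i, (α i * ((1/2) * x i ^ 2) + b i * x i)
            = ∑ i, ((1/2) * α i * x i ^ 2 + b i * x i) :=
          Finset.sum_congr rfl fun i _ => by ring
        rw [quadCon] at hcon
        linarith
      refine le_trans (sInf_le hmem) ?_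
      apply EReal.coe_le_coe_iff.mpr
      rw [socpObj, quadObj, hc₀]
      have e1 : ∑ i, (δ i * ((1/2) * x i ^ 2) + e i * x i)
          = ∑ i, ((1/2) * δ i * x i ^ 2 + e i * x i) :=
        Finset.sum_congr rfl fun i _ => by ring
      have e2 : ∑ j, (ζ j * u j * w j + (1/2) * w j ^ 2 + η j * w j)
          = (∑ j, ζ j * (u j * w j)) + ∑ j, ((1/2) * w j ^ 2 + η j * w j) := by
        rw [← Finset.sum_add_distrib]
        exact Finset.sum_congr rfl fun j _ => by ring
      have e3 : (∑ j, ((1/2) * w j ^ 2 + η j * w j)) + (1/2) * ∑ j, η j ^ 2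
          = ∑ j, (1/2) * (w j + η j)^2 := by
        rw [Finset.mul_sum, ← Finset.sum_add_distrib]
        exact Finset.sum_congr rfl fun j _ => by ring
      have e4 : 0 ≤ ∑ j, (1/2) * (w j + η j)^2 :=
        Finset.sum_nonneg fun j _ => by positivity
      rw [e1, e2]
      linarith
  · rintro ⟨x, y, z, hcon, hy, hopt⟩
    choose t ht1 ht2 using fun i => key_pt (δ i) (e i) (α i) (b i) (x i) (y i) (hy i)
    have hcon' : socpConLhs α b t (fun i => (1/2) * t i ^ 2) z + c ≤ 0 := by
      rw [socpConLhs]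
      rw [socpConLhs] at hcon
      have h1 : ∑ i, (α i * ((1/2) * t i ^ 2) + b i * t i) ≤ ∑ i, (α i * y i + b i * x i) := by
        apply Finset.sum_le_sum
        intro i _
        have := ht2 i
        nlinarith [ht2 i]
      linarith
    have hobj' : socpObj δ e ζ c₀ t (fun i => (1/2) * t i ^ 2) z ≤ socpObj δ e ζ c₀ x y z := by
      rw [socpObj, socpObj]
      have h1 : ∑ i, (δ i * ((1/2) * t i ^ 2) + e i * t i) ≤ ∑ i, (δ i * y i + e i * x i) := by
        apply Finset.sum_le_sum
        intro i _
        nlinarith [ht1 i]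
      linarith
    refine ⟨t, fun i => (1/2) * t i ^ 2, z, hcon', fun i => le_rfl, fun i => rfl, ?_⟩
    apply le_antisymm
    · rw [← hopt]
      exact EReal.coe_le_coe_iff.mpr hobj'
    · rw [socpVal]
      exact sInf_le ⟨t, _, z, hcon', fun i => le_rfl, rfl⟩
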